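/- arXiv:2201.12277 — 2 statements merged into one kernel-verified Lean document; each statement's English description precedes it below -/
import Mathlib

section
/- Monotonicity of the one-step Bellman update in AoI: if V : {0,…,N} × {0,…,B} × {1,…,Δmax} → ℝ is non-decreasing in its third (AoI) argument, then the updated function V'(r,b,Δ) = min over a ∈ {0,1} of [r·Δ'(b,Δ,a) + μ·a + ∑_{r',l} P(r')·q(l)·V(r', b'(b,a,l), Δ'(b,Δ,a))] is also non-decreasing in Δ, where Δ'(b,Δ,a) = 1 if (a = 1 and b ≥ 1) and min(Δ+1, Δmax) otherwise, b'(b,a,l) = min(b + l − a·1_{b≥1}, B), q(1) = λ, q(0) = 1 − λ with λ ∈ [0,1], μ ≥ 0, and P is any probability mass function on {0,…,N}. -/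
open Finset

/-- Next AoI: 1 if command and battery nonempty, else min(Δ+1, Δmax). -/
def nextAoI (Δmax b Δ a : ℕ) : ℕ :=
  if a = 1 ∧ 1 ≤ b then 1 else min (Δ + 1) Δmax

/-- Next battery: min(b + l − a·1_{b≥1}, B). -/
def nextBat (B b a l : ℕ) : ℕ :=
  min (b + l - (if a = 1 ∧ 1 ≤ b then 1 else 0)) B

/-- Harvesting pmf: q(1) = λ, q(0) = 1 − λ. -/
def harvProb (lam : ℝ) (l : ℕ) : ℝ := if l = 1 then lam else 1 - lam

/-- State-action value in the per-sensor Bellman update. -/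
noncomputable def bellmanQ (N B Δmax : ℕ) (lam μ : ℝ) (P : ℕ → ℝ)
    (V : ℕ → ℕ → ℕ → ℝ) (r b Δ a : ℕ) : ℝ :=
  (r : ℝ) * (nextAoI Δmax b Δ a : ℝ) + μ * (a : ℝ) +
    ∑ r' ∈ range (N + 1), ∑ l ∈ range 2,
      P r' * harvProb lam l * V r' (nextBat B b a l) (nextAoI Δmax b Δ a)

/-- Bellman-updated value function. -/
noncomputable def bellmanUpdate (N B Δmax : ℕ) (lam μ : ℝ) (P : ℕ → ℝ)
    (V : ℕ → ℕ → ℕ → ℝ) (r b Δ : ℕ) : ℝ :=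
  min (bellmanQ N B Δmax lam μ P V r b Δ 0) (bellmanQ N B Δmax lam μ P V r b Δ 1)

/-! The AoI enters each Q-value only through `nextAoI`, which is monotone in it: once linearly
with coefficient `r ≥ 0`, and once as the argument of `V` under the nonnegative weights
`P r' * q l`. A minimum of monotone functions is monotone. -/

theorem nextAoI_monotone (Δmax b a : ℕ) : Monotone (nextAoI Δmax b · a) := by
  intro Δ Δ' h
  dsimp only [nextAoI]
  split
  · rfl
  · gcongr

theorem harvProb_nonneg {lam : ℝ} (hlam0 : 0 ≤ lam) (hlam1 : lam ≤ 1) (l : ℕ) :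
    0 ≤ harvProb lam l := by
  unfold harvProb
  split <;> linarith

theorem bellmanQ_monotone_aoi (N B Δmax : ℕ) {lam : ℝ} (hlam0 : 0 ≤ lam) (hlam1 : lam ≤ 1)
    (μ : ℝ) {P : ℕ → ℝ} (hP0 : ∀ r', 0 ≤ P r') {V : ℕ → ℕ → ℕ → ℝ}
    (hV : ∀ r b, Monotone (V r b)) (r b a : ℕ) :
    Monotone (bellmanQ N B Δmax lam μ P V r b · a) := by
  intro Δ Δ' h
  have haoi := nextAoI_monotone Δmax b a h
  dsimp only [bellmanQ]
  gcongr with r' _ l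
  · exact mul_nonneg (hP0 r') (harvProb_nonneg hlam0 hlam1 l)
  · exact hV _ _ haoi

theorem bellmanUpdate_mono_aoi_general (N B Δmax : ℕ)
    (lam μ : ℝ) (hlam0 : 0 ≤ lam) (hlam1 : lam ≤ 1)
    (P : ℕ → ℝ) (hP0 : ∀ r', 0 ≤ P r')
    (V : ℕ → ℕ → ℕ → ℝ)
    (hV : ∀ r b Δ Δ', Δ ≤ Δ' → V r b Δ ≤ V r b Δ')
    (r b Δ Δ' : ℕ) (h : Δ ≤ Δ') :
    bellmanUpdate N B Δmax lam μ P V r b Δ ≤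
      bellmanUpdate N B Δmax lam μ P V r b Δ' := by
  have hQ := bellmanQ_monotone_aoi N B Δmax hlam0 hlam1 μ hP0 (fun r b _ _ => hV r b _ _) r b
  exact min_le_min (hQ 0 h) (hQ 1 h)

/-- Monotonicity of the one-step Bellman update in the AoI. -/
theorem bellmanUpdate_mono_aoi (N B Δmax : ℕ) (hN : 1 ≤ N) (hB : 1 ≤ B)
    (hΔmax : 1 ≤ Δmax) (lam μ : ℝ) (hlam0 : 0 ≤ lam) (hlam1 : lam ≤ 1)
    (hμ : 0 ≤ μ) (P : ℕ → ℝ) (hP0 : ∀ r', 0 ≤ P r')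
    (hP1 : ∀ r', P r' ≤ 1) (hPsum : ∑ r' ∈ range (N + 1), P r' = 1)
    (V : ℕ → ℕ → ℕ → ℝ)
    (hV : ∀ r b Δ Δ', Δ ≤ Δ' → V r b Δ ≤ V r b Δ')
    (r b Δ Δ' : ℕ) (h : Δ ≤ Δ') :
    bellmanUpdate N B Δmax lam μ P V r b Δ ≤
      bellmanUpdate N B Δmax lam μ P V r b Δ' :=
  bellmanUpdate_mono_aoi_general N B Δmax lam μ hlam0 hlam1 P hP0 V hV r b Δ Δ' h
end

section
/- Threshold structure in AoI: under the same Bellman setup, if V is non-decreasing in the AoI argument and the action a = 1 is optimal in state (r, b, Δ) (i.e., Q(s,1) ≤ Q(s,0)), then a = 1 is also optimal in state (r, b, Δ̄) for every Δ̄ ≥ Δ, where Q(s,a) = r·Δ'(b,Δ,a) + μ·a + ∑_{r',l} P(r')·q(l)·V(r', b'(b,a,l), Δ'(b,Δ,a)). -/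
/-!
The state `(r, b, Δ)` enters the Bellman value only through the next AoI, which is monotone in
`Δ`, so both action values are non-decreasing in `Δ`. With a non-empty battery the value of
commanding does not depend on `Δ` at all (the AoI resets to 1), so commanding stays optimal as
`Δ` grows. With an empty battery the command is void and costs `μ` more than idling at every
`Δ`, so it is optimal exactly when `μ ≤ 0`, whatever the AoI.
-/

open Finset

theorem nextAoI_mono (Δmax b a : ℕ) : Monotone (fun Δ ↦ nextAoI Δmax b Δ a) := by
  intro Δ Δ' h
  simp only [nextAoI]
  split_ifs <;> omega

section bellmanQ

variable (N B Δmax : ℕ) (lam μ : ℝ) (P : ℕ → ℝ) (V : ℕ → ℕ → ℕ → ℝ) (r b : ℕ)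

theorem bellmanQ_mono_aoi (hlam0 : 0 ≤ lam) (hlam1 : lam ≤ 1) (hP0 : ∀ r', 0 ≤ P r')
    (hV : ∀ r b Δ Δ', Δ ≤ Δ' → V r b Δ ≤ V r b Δ') (a : ℕ) :
    Monotone (fun Δ ↦ bellmanQ N B Δmax lam μ P V r b Δ a) := by
  intro Δ Δ' h
  have hnext := nextAoI_mono Δmax b a h
  simp only [bellmanQ]
  gcongr with r' _ l _
  · exact mul_nonneg (hP0 r') (harvProb_nonneg hlam0 hlam1 l)
  · exact hV _ _ _ _ hnext

theorem bellmanQ_command_eq_of_one_le (hb : 1 ≤ b) (Δ Δ' : ℕ) :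
    bellmanQ N B Δmax lam μ P V r b Δ 1 = bellmanQ N B Δmax lam μ P V r b Δ' 1 := by
  simp [bellmanQ, nextAoI, hb]

theorem bellmanQ_command_empty_battery (Δ : ℕ) :
    bellmanQ N B Δmax lam μ P V r 0 Δ 1 = bellmanQ N B Δmax lam μ P V r 0 Δ 0 + μ := by
  simp [bellmanQ, nextAoI, nextBat]
  ring

end bellmanQ

theorem bellman_threshold_aoi_general (N B Δmax : ℕ) (lam μ : ℝ) (hlam0 : 0 ≤ lam) (hlam1 : lam ≤ 1)
    (P : ℕ → ℝ) (hP0 : ∀ r', 0 ≤ P r')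
    (V : ℕ → ℕ → ℕ → ℝ)
    (hV : ∀ r b Δ Δ', Δ ≤ Δ' → V r b Δ ≤ V r b Δ')
    (r b Δ Δ' : ℕ) (h : Δ ≤ Δ')
    (hopt : bellmanQ N B Δmax lam μ P V r b Δ 1 ≤
      bellmanQ N B Δmax lam μ P V r b Δ 0) :
    bellmanQ N B Δmax lam μ P V r b Δ' 1 ≤
      bellmanQ N B Δmax lam μ P V r b Δ' 0 := by
  have hidle := bellmanQ_mono_aoi N B Δmax lam μ P V r b hlam0 hlam1 hP0 hV 0 h
  rcases Nat.eq_zero_or_pos b with rfl | hb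
  · rw [bellmanQ_command_empty_battery] at hopt ⊢
    linarith
  · calc bellmanQ N B Δmax lam μ P V r b Δ' 1
        = bellmanQ N B Δmax lam μ P V r b Δ 1 :=
          bellmanQ_command_eq_of_one_le N B Δmax lam μ P V r b hb Δ' Δ
      _ ≤ bellmanQ N B Δmax lam μ P V r b Δ 0 := hopt
      _ ≤ bellmanQ N B Δmax lam μ P V r b Δ' 0 := hidle

/-- Threshold structure in AoI: if commanding is optimal at AoI Δ, it remains
optimal at every larger AoI Δ' ≤ Δmax. -/
theorem bellman_threshold_aoi (N B Δmax : ℕ) (hN : 1 ≤ N) (hB : 1 ≤ B)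
    (hΔmax : 1 ≤ Δmax) (lam μ : ℝ) (hlam0 : 0 ≤ lam) (hlam1 : lam ≤ 1)
    (hμ : 0 ≤ μ) (P : ℕ → ℝ) (hP0 : ∀ r', 0 ≤ P r')
    (hP1 : ∀ r', P r' ≤ 1) (hPsum : ∑ r' ∈ range (N + 1), P r' = 1)
    (V : ℕ → ℕ → ℕ → ℝ)
    (hV : ∀ r b Δ Δ', Δ ≤ Δ' → V r b Δ ≤ V r b Δ')
    (r b Δ Δ' : ℕ) (h : Δ ≤ Δ') (hm : Δ' ≤ Δmax)
    (hopt : bellmanQ N B Δmax lam μ P V r b Δ 1 ≤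
      bellmanQ N B Δmax lam μ P V r b Δ 0) :
    bellmanQ N B Δmax lam μ P V r b Δ' 1 ≤
      bellmanQ N B Δmax lam μ P V r b Δ' 0 :=
  bellman_threshold_aoi_general N B Δmax lam μ hlam0 hlam1 P hP0 V hV r b Δ Δ' h hopt
end
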